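/- arXiv:2507.23572 — 5 statements merged into one kernel-verified Lean document; each statement's English description precedes it below -/
import Mathlib

section
/- Let a be a real number and f : ℝ³ → ℂ a smooth compactly supported function. Then the exponentially weighted L² norm of the x-derivative dominates the weighted norm of f itself: (∫ |∂ₓ f(x,y)|² e^{2ax} dx dy)^{1/2} ≥ |a| · (∫ |f(x,y)|² e^{2ax} dx dy)^{1/2}. -/
open MeasureTheory

/-- 1D: the integral of the derivative of a C¹ compactly supported function vanishes. -/
lemma ibp1 (g : ℝ → ℝ) (hg : ContDiff ℝ 1 g) (hs : HasCompactSupport g) :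
    ∫ x : ℝ, deriv g x = 0 := by
  have hi : Integrable (deriv g) :=
    (hg.continuous_deriv le_rfl).integrable_of_hasCompactSupport hs.deriv
  have h1 := hs.integral_Iic_deriv_eq hg 0
  have h2 := hs.integral_Ioi_deriv_eq hg 0
  rw [← intervalIntegral.integral_Iic_add_Ioi (b := 0) hi.integrableOn hi.integrableOn, h1, h2]
  ring

/-- 3D: the integral of a directional derivative of a smooth compactly supported
function vanishes. -/
lemma ibp3 (H : ℝ × ℝ × ℝ → ℝ) (hH : ContDiff ℝ (⊤ : ℕ∞) H) (hs : HasCompactSupport H) :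
    ∫ p : ℝ × ℝ × ℝ, fderiv ℝ H p (1, 0, 0) = 0 := by
  have hDc : Continuous fun p => fderiv ℝ H p (1, 0, 0) :=
    (hH.continuous_fderiv (by simp)).clm_apply continuous_const
  have hDs : HasCompactSupport fun p => fderiv ℝ H p (1, 0, 0) := by
    apply (hs.fderiv ℝ).mono
    intro p hp
    simp only [Function.mem_support] at hp ⊢
    intro h
    apply hp
    rw [h]; rfl
  have hDi : Integrable (fun p => fderiv ℝ H p (1, 0, 0)) :=
    hDc.integrable_of_hasCompactSupport hDs
  rw [Measure.volume_eq_prod] at hDi ⊢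
  rw [integral_prod_symm _ hDi]
  have key : ∀ y : ℝ × ℝ, ∫ x : ℝ, fderiv ℝ H (x, y) (1, 0, 0) = 0 := by
    intro y
    set g : ℝ → ℝ := fun x => H (x, y) with hgdef
    have hg : ContDiff ℝ 1 g :=
      (hH.of_le (by simp)).comp (contDiff_id.prodMk contDiff_const)
    have hgs : HasCompactSupport g := by
      apply HasCompactSupport.of_support_subset_isCompact (hs.image continuous_fst)
      intro x hx
      simp only [Function.mem_support] at hx
      exact ⟨(x, y), subset_tsupport H hx, rfl⟩
    have hderiv : ∀ x : ℝ, deriv g x = fderiv ℝ H (x, y) (1, 0, 0) := by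
      intro x
      have h1 : HasDerivAt (fun x : ℝ => (x, y)) ((1 : ℝ), (0 : ℝ × ℝ)) x :=
        (hasDerivAt_id x).prodMk (hasDerivAt_const x y)
      have h2 : HasFDerivAt H (fderiv ℝ H (x, y)) (x, y) :=
        (hH.differentiable (by simp) (x, y)).hasFDerivAt
      exact (h2.comp_hasDerivAt x h1).deriv
    calc ∫ x : ℝ, fderiv ℝ H (x, y) (1, 0, 0) = ∫ x : ℝ, deriv g x := by
          simp_rw [hderiv]
      _ = 0 := ibp1 g hg hgs
  simp_rw [key]
  simp

/-- Weighted Poincaré-type inequality: for smooth compactly supported `f` on ℝ³,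
`‖∂ₓ f‖_{L²_a} ≥ |a| ‖f‖_{L²_a}` where `L²_a = L²(e^{2ax} dx dy)`. -/
theorem stmt0 (a : ℝ) (f : ℝ × ℝ × ℝ → ℂ)
    (hf : ContDiff ℝ (⊤ : ℕ∞) f) (hsupp : HasCompactSupport f) :
    |a| * Real.sqrt (∫ p : ℝ × ℝ × ℝ, ‖f p‖ ^ 2 * Real.exp (2 * a * p.1)) ≤
      Real.sqrt (∫ p : ℝ × ℝ × ℝ, ‖fderiv ℝ f p (1, 0, 0)‖ ^ 2 * Real.exp (2 * a * p.1)) := by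
  set F : (ℝ × ℝ × ℝ) → ℂ := fun p => fderiv ℝ f p (1, 0, 0) with hFdef
  set e : (ℝ × ℝ × ℝ) → ℝ := fun p => Real.exp (2 * a * p.1) with hedef
  have hec : Continuous e := Real.continuous_exp.comp (continuous_const.mul continuous_fst)
  have hFc : Continuous F := (hf.continuous_fderiv (by simp)).clm_apply continuous_const
  have hFs : HasCompactSupport F := by
    apply (hsupp.fderiv ℝ).mono
    intro p hp
    simp only [Function.mem_support] at hp ⊢
    intro h; apply hp
    simp only [hFdef]
    rw [h]; rfl
  -- integrability of the three ingredients
  have I1 : Integrable fun p : ℝ × ℝ × ℝ => ‖f p‖ ^ 2 * e p := by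
    apply Continuous.integrable_of_hasCompactSupport
    · exact (hf.continuous.norm.pow 2).mul hec
    · apply (hsupp.norm.mono (fun p hp => ?_)).mul_right
      simp only [Function.mem_support] at hp ⊢
      intro h; apply hp; simp [h]
  have I2 : Integrable fun p : ℝ × ℝ × ℝ => (inner ℝ (f p) (F p) : ℝ) * e p := by
    apply Continuous.integrable_of_hasCompactSupport
    · exact (hf.continuous.inner hFc).mul hec
    · apply (hsupp.norm.mono (fun p hp => ?_)).mul_right
      simp only [Function.mem_support] at hp ⊢
      intro h; apply hp
      rw [norm_eq_zero] at h
      simp [h]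
  have I3 : Integrable fun p : ℝ × ℝ × ℝ => ‖F p‖ ^ 2 * e p := by
    apply Continuous.integrable_of_hasCompactSupport
    · exact (hFc.norm.pow 2).mul hec
    · apply (hFs.norm.mono (fun p hp => ?_)).mul_right
      simp only [Function.mem_support] at hp ⊢
      intro h; apply hp; simp [h]
  -- the integration by parts identity
  set h : (ℝ × ℝ × ℝ) → ℝ := fun p => ‖f p‖ ^ 2 * e p with hhdef
  have hh : ContDiff ℝ (⊤ : ℕ∞) h :=
    (ContDiff.norm_sq (𝕜 := ℂ) hf).mul
      (Real.contDiff_exp.comp (contDiff_const.mul contDiff_fst))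
  have hhs : HasCompactSupport h := by
    apply (hsupp.norm.mono (fun p hp => ?_)).mul_right
    simp only [Function.mem_support] at hp ⊢
    intro hz; apply hp; simp [hz]
  have hD : ∀ p : ℝ × ℝ × ℝ, fderiv ℝ h p (1, 0, 0) =
      2 * (inner ℝ (f p) (F p) : ℝ) * e p + ‖f p‖ ^ 2 * (2 * a * e p) := by
    intro p
    have h2 : HasFDerivAt f (fderiv ℝ f p) p := (hf.differentiable (by simp) p).hasFDerivAt
    have hφ : HasFDerivAt (fun q => ‖f q‖ ^ 2)
        (2 • (innerSL ℝ (f p)).comp (fderiv ℝ f p)) p := h2.norm_sq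
    have hL : HasFDerivAt (fun q : ℝ × ℝ × ℝ => 2 * a * q.1)
        ((2 * a) • (ContinuousLinearMap.fst ℝ ℝ (ℝ × ℝ))) p := by
      simpa using (ContinuousLinearMap.hasFDerivAt
        (ContinuousLinearMap.fst ℝ ℝ (ℝ × ℝ)) (x := p)).const_mul (2 * a)
    have hψ : HasFDerivAt e
        (Real.exp (2 * a * p.1) • ((2 * a) • (ContinuousLinearMap.fst ℝ ℝ (ℝ × ℝ)))) p :=
      by have := (Real.hasDerivAt_exp (2 * a * p.1)).comp_hasFDerivAt p hL; exact this
    have hmul : HasFDerivAt h _ p := hφ.mul hψ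
    rw [hmul.fderiv]
    simp only [ContinuousLinearMap.add_apply, ContinuousLinearMap.smul_apply,
      ContinuousLinearMap.comp_apply, innerSL_apply_apply, smul_eq_mul,
      ContinuousLinearMap.coe_fst', hedef, hFdef]
    rw [real_inner_comm]
    ring
  have hibp : ∫ p : ℝ × ℝ × ℝ, fderiv ℝ h p (1, 0, 0) = 0 := ibp3 h hh hhs
  have Ia : Integrable fun p : ℝ × ℝ × ℝ => 2 * (inner ℝ (f p) (F p) : ℝ) * e p :=
    (I2.const_mul 2).congr (Filter.Eventually.of_forall fun p => by ring)
  have Ib : Integrable fun p : ℝ × ℝ × ℝ => ‖f p‖ ^ 2 * (2 * a * e p) :=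
    (I1.const_mul (2 * a)).congr (Filter.Eventually.of_forall fun p => by ring)
  have key : ∫ p : ℝ × ℝ × ℝ, (inner ℝ (f p) (F p) : ℝ) * e p =
      -a * ∫ p : ℝ × ℝ × ℝ, ‖f p‖ ^ 2 * e p := by
    have hthis := hibp
    simp_rw [hD] at hthis
    have S1 : ∫ p : ℝ × ℝ × ℝ,
        (2 * (inner ℝ (f p) (F p) : ℝ) * e p + ‖f p‖ ^ 2 * (2 * a * e p)) =
        (∫ p : ℝ × ℝ × ℝ, 2 * (inner ℝ (f p) (F p) : ℝ) * e p) +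
          ∫ p : ℝ × ℝ × ℝ, ‖f p‖ ^ 2 * (2 * a * e p) := integral_add Ia Ib
    have S2 : ∫ p : ℝ × ℝ × ℝ, 2 * (inner ℝ (f p) (F p) : ℝ) * e p =
        2 * ∫ p : ℝ × ℝ × ℝ, (inner ℝ (f p) (F p) : ℝ) * e p := by
      simp_rw [mul_assoc]; exact integral_const_mul 2 _
    have S3 : ∫ p : ℝ × ℝ × ℝ, ‖f p‖ ^ 2 * (2 * a * e p) =
        2 * a * ∫ p : ℝ × ℝ × ℝ, ‖f p‖ ^ 2 * e p := by
      simp_rw [show ∀ p : ℝ × ℝ × ℝ, ‖f p‖ ^ 2 * (2 * a * e p) =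
        2 * a * (‖f p‖ ^ 2 * e p) from fun p => by ring]
      exact integral_const_mul _ _
    rw [S1, S2, S3] at hthis
    linarith
  -- expand the square
  have hnonneg : 0 ≤ ∫ p : ℝ × ℝ × ℝ, ‖F p + a • f p‖ ^ 2 * e p := by
    apply integral_nonneg
    intro p
    positivity
  have Ic : Integrable fun p : ℝ × ℝ × ℝ => 2 * a * ((inner ℝ (f p) (F p) : ℝ) * e p) :=
    I2.const_mul (2 * a)
  have Id : Integrable fun p : ℝ × ℝ × ℝ => a ^ 2 * (‖f p‖ ^ 2 * e p) :=
    I1.const_mul (a ^ 2)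
  have hexp : ∫ p : ℝ × ℝ × ℝ, ‖F p + a • f p‖ ^ 2 * e p =
      (∫ p : ℝ × ℝ × ℝ, ‖F p‖ ^ 2 * e p) - a ^ 2 * ∫ p : ℝ × ℝ × ℝ, ‖f p‖ ^ 2 * e p := by
    have hpt : ∀ p : ℝ × ℝ × ℝ, ‖F p + a • f p‖ ^ 2 * e p =
        ‖F p‖ ^ 2 * e p + 2 * a * ((inner ℝ (f p) (F p) : ℝ) * e p) +
          a ^ 2 * (‖f p‖ ^ 2 * e p) := by
      intro p
      have hsq : ‖F p + a • f p‖ ^ 2 =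
          ‖F p‖ ^ 2 + 2 * (inner ℝ (F p) (a • f p) : ℝ) + ‖a • f p‖ ^ 2 :=
        norm_add_sq_real _ _
      rw [hsq, real_inner_smul_right, norm_smul, real_inner_comm]
      simp only [Real.norm_eq_abs, mul_pow, sq_abs]
      ring
    simp_rw [hpt]
    have E1 : ∫ p : ℝ × ℝ × ℝ,
        (‖F p‖ ^ 2 * e p + 2 * a * ((inner ℝ (f p) (F p) : ℝ) * e p) +
          a ^ 2 * (‖f p‖ ^ 2 * e p)) =
        (∫ p : ℝ × ℝ × ℝ, (‖F p‖ ^ 2 * e p + 2 * a * ((inner ℝ (f p) (F p) : ℝ) * e p))) +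
          ∫ p : ℝ × ℝ × ℝ, a ^ 2 * (‖f p‖ ^ 2 * e p) :=
      integral_add (I3.add Ic) Id
    have E2 : ∫ p : ℝ × ℝ × ℝ,
        (‖F p‖ ^ 2 * e p + 2 * a * ((inner ℝ (f p) (F p) : ℝ) * e p)) =
        (∫ p : ℝ × ℝ × ℝ, ‖F p‖ ^ 2 * e p) +
          ∫ p : ℝ × ℝ × ℝ, 2 * a * ((inner ℝ (f p) (F p) : ℝ) * e p) :=
      integral_add I3 Ic
    rw [E1, E2, integral_const_mul, integral_const_mul, key]
    ring
  have hmain : a ^ 2 * (∫ p : ℝ × ℝ × ℝ, ‖f p‖ ^ 2 * e p) ≤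
      ∫ p : ℝ × ℝ × ℝ, ‖F p‖ ^ 2 * e p := by
    rw [hexp] at hnonneg; linarith
  calc |a| * Real.sqrt (∫ p : ℝ × ℝ × ℝ, ‖f p‖ ^ 2 * e p)
      = Real.sqrt (a ^ 2 * ∫ p : ℝ × ℝ × ℝ, ‖f p‖ ^ 2 * e p) := by
        rw [Real.sqrt_mul (sq_nonneg a), Real.sqrt_sq_eq_abs]
    _ ≤ Real.sqrt (∫ p : ℝ × ℝ × ℝ, ‖F p‖ ^ 2 * e p) := Real.sqrt_le_sqrt hmain
end

section
/- Let a ∈ (0, 1/2), ξ ∈ ℝ, ζ ∈ ℝ², and let μ_a(ξ,ζ) be the principal square root of (ξ + ia)² + |ζ|². Then |Im μ_a(ξ,ζ)| ≤ a for all (ξ,ζ) ∈ ℝ³. -/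
/-!
If `z² = w` then `2 (Im z)² = |w| - Re w`. For `w = u² + c` with `c ≥ 0` real, the triangle
inequality gives `|w| - Re w ≤ |u²| + c - Re u² - c = 2 (Im u)²`, so `|Im z| ≤ |Im u|`;
with `u = ξ + ia` this is `|Im μ_a| ≤ a`.
-/

namespace Complex

theorem two_mul_im_sq_of_sq_eq {z w : ℂ} (h : z ^ 2 = w) : 2 * z.im ^ 2 = ‖w‖ - w.re := by
  have hnorm : ‖w‖ = z.re ^ 2 + z.im ^ 2 := by
    rw [← h, norm_pow, Complex.sq_norm, normSq_apply]; ring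
  rw [hnorm, ← h]
  simp only [pow_two, mul_re]
  ring

theorem im_sq_le_of_sq_eq_sq_add_ofReal {z u : ℂ} {c : ℝ} (hc : 0 ≤ c)
    (h : z ^ 2 = u ^ 2 + c) : z.im ^ 2 ≤ u.im ^ 2 := by
  have hz := two_mul_im_sq_of_sq_eq h
  have hu := two_mul_im_sq_of_sq_eq (rfl : u ^ 2 = u ^ 2)
  have htri : ‖u ^ 2 + c‖ ≤ ‖u ^ 2‖ + c :=
    (norm_add_le _ _).trans_eq (by rw [norm_real, Real.norm_of_nonneg hc])
  have hre : (u ^ 2 + c).re = (u ^ 2).re + c := by simp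
  linarith

theorem abs_im_cpow_half_sq_add_ofReal_le {u : ℂ} {c : ℝ} (hc : 0 ≤ c) :
    |((u ^ 2 + c) ^ ((1 : ℂ) / 2)).im| ≤ |u.im| :=
  sq_le_sq.mp <| im_sq_le_of_sq_eq_sq_add_ofReal hc <| by
    rw [one_div, cpow_ofNat_inv_pow]

end Complex

theorem stmt6_general (a ξ : ℝ) (ha : 0 < a) (ζ : EuclideanSpace ℝ (Fin 2)) :
    |Complex.im ((((ξ : ℂ) + (a : ℂ) * Complex.I) ^ 2 + (‖ζ‖ : ℂ) ^ 2) ^ ((1 : ℂ) / 2))| ≤ a := by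
  have h := Complex.abs_im_cpow_half_sq_add_ofReal_le (u := ξ + a * Complex.I) (sq_nonneg ‖ζ‖)
  push_cast at h
  simpa [abs_of_pos ha] using h

/-- For `a ∈ (0,1/2)`, the principal square root `μ_a(ξ,ζ) = √((ξ+ia)² + |ζ|²)` satisfies
`|Im μ_a| ≤ a` for all `(ξ,ζ) ∈ ℝ³`. -/
theorem stmt6 (a ξ : ℝ) (ha : 0 < a) (ha' : a < 1 / 2) (ζ : EuclideanSpace ℝ (Fin 2)) :
    |Complex.im ((((ξ : ℂ) + (a : ℂ) * Complex.I) ^ 2 + (‖ζ‖ : ℂ) ^ 2) ^ ((1 : ℂ) / 2))| ≤ a :=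
  stmt6_general a ξ ha ζ
end

section
/- Let a > 0, ξ > 0, |ζ| ≥ 0 and h₁ > 0, with a < 1/2. With μ_a = √((ξ+ia)² + |ζ|²) and σ_a = √(h₁ + (1+|ζ|²+(ξ+ia)²)^{-1}) (principal square roots), one has Im μ_a > 0, Im σ_a < 0, and |Im(μ_a σ_a)| ≤ |Im μ_a| · Re σ_a. -/
open Complex

lemma half_pow_sq (z : ℂ) (hz : z ≠ 0) : (z ^ ((1 : ℂ)/2)) ^ 2 = z := by
  rw [show (1:ℂ)/2 = ((2:ℕ) : ℂ)⁻¹ by norm_num]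
  exact_mod_cast Complex.cpow_nat_inv_pow z two_ne_zero

lemma sqrt_of_im_pos (z : ℂ) (hz : 0 < z.im) :
    0 < (z ^ ((1:ℂ)/2)).re ∧ 0 < (z ^ ((1:ℂ)/2)).im := by
  have hz0 : z ≠ 0 := fun h => by simp [h] at hz
  have hargpos : 0 < z.arg := by
    rcases lt_or_eq_of_le (Complex.arg_nonneg_iff.2 hz.le) with h | h
    · exact h
    · exact absurd (Complex.arg_eq_zero_iff.1 h.symm).2 hz.ne'
  have harglt : z.arg < Real.pi := by
    rcases lt_or_eq_of_le (Complex.arg_le_pi z) with h | h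
    · exact h
    · exact absurd (Complex.arg_eq_pi_iff.1 h).2 hz.ne'
  rw [Complex.cpow_def_of_ne_zero hz0]
  have him : (Complex.log z * ((1:ℂ)/2)).im = z.arg / 2 := by
    simp [Complex.mul_im, Complex.log_im]
    ring
  rw [Complex.exp_re, Complex.exp_im, him]
  have hpi := Real.pi_pos
  constructor
  · exact mul_pos (Real.exp_pos _)
      (Real.cos_pos_of_mem_Ioo ⟨by linarith, by linarith⟩)
  · exact mul_pos (Real.exp_pos _)
      (Real.sin_pos_of_pos_of_lt_pi (by linarith) (by linarith))

lemma sqrt_of_im_neg (z : ℂ) (hz : z.im < 0) :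
    0 < (z ^ ((1:ℂ)/2)).re ∧ (z ^ ((1:ℂ)/2)).im < 0 := by
  have hz0 : z ≠ 0 := fun h => by simp [h] at hz
  have hargneg : z.arg < 0 := Complex.arg_neg_iff.2 hz
  have harggt : -Real.pi < z.arg := Complex.neg_pi_lt_arg z
  rw [Complex.cpow_def_of_ne_zero hz0]
  have him : (Complex.log z * ((1:ℂ)/2)).im = z.arg / 2 := by
    simp [Complex.mul_im, Complex.log_im]
    ring
  rw [Complex.exp_re, Complex.exp_im, him]
  have hpi := Real.pi_pos
  constructor
  · exact mul_pos (Real.exp_pos _)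
      (Real.cos_pos_of_mem_Ioo ⟨by linarith, by linarith⟩)
  · exact mul_neg_of_pos_of_neg (Real.exp_pos _)
      (Real.sin_neg_of_neg_of_neg_pi_lt (by linarith) (by linarith))

set_option maxHeartbeats 1000000 in
/-- For `0 < a < 1/2`, `ξ > 0`, `h₁ > 0`: with `μ_a = √((ξ+ia)²+|ζ|²)` and
`σ_a = √(h₁+(1+|ζ|²+(ξ+ia)²)⁻¹)` (principal roots), one has `Im μ_a > 0`, `Im σ_a < 0`,
and `|Im(μ_a σ_a)| ≤ |Im μ_a| · Re σ_a`. -/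
theorem stmt8 (h₁ a ξ : ℝ) (hh : 0 < h₁) (ha : 0 < a) (ha' : a < 1 / 2) (hξ : 0 < ξ)
    (ζ : EuclideanSpace ℝ (Fin 2)) :
    let μ : ℂ := (((ξ : ℂ) + (a : ℂ) * Complex.I) ^ 2 + (‖ζ‖ : ℂ) ^ 2) ^ ((1 : ℂ) / 2)
    let σ : ℂ := ((h₁ : ℂ) +
      (1 + (‖ζ‖ : ℂ) ^ 2 + ((ξ : ℂ) + (a : ℂ) * Complex.I) ^ 2)⁻¹) ^ ((1 : ℂ) / 2)
    0 < μ.im ∧ σ.im < 0 ∧ |(μ * σ).im| ≤ |μ.im| * σ.re := by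
  intro μ σ
  set c : ℝ := ‖ζ‖ with hc
  set z : ℂ := (((ξ : ℂ) + (a : ℂ) * Complex.I) ^ 2 + (c : ℂ) ^ 2) with hzdef
  set u : ℂ := (1 + (c : ℂ) ^ 2 + ((ξ : ℂ) + (a : ℂ) * Complex.I) ^ 2) with hudef
  have hzre : z.re = ξ^2 - a^2 + c^2 := by
    simp [hzdef, pow_two, Complex.mul_re, Complex.mul_im, Complex.add_re]
    try ring
  have hzim : z.im = 2 * a * ξ := by
    simp [hzdef, pow_two, Complex.mul_re, Complex.mul_im]
    try ring
  have hure : u.re = 1 + c^2 + ξ^2 - a^2 := by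
    simp [hudef, pow_two, Complex.mul_re, Complex.mul_im]
    try ring
  have huim : u.im = 2 * a * ξ := by
    simp [hudef, pow_two, Complex.mul_re, Complex.mul_im]
    try ring
  have ha2 : a^2 < 1/4 := by nlinarith
  have hc0 : (0:ℝ) ≤ c := norm_nonneg ζ
  have haξ : 0 < a * ξ := mul_pos ha hξ
  have hzimpos : 0 < z.im := by rw [hzim]; positivity
  have hurepos : 0 < u.re := by rw [hure]; nlinarith
  have hu0 : u ≠ 0 := fun h => by simp [h] at hurepos
  set J : ℝ := Complex.normSq u with hJ
  have hJpos : 0 < J := Complex.normSq_pos.2 hu0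
  have hJval : J = u.re^2 + u.im^2 := by rw [hJ, Complex.normSq_apply]; ring
  set w : ℂ := ((h₁ : ℂ) + u⁻¹) with hwdef
  have hwre : w.re = h₁ + u.re / J := by
    simp [hwdef, Complex.add_re, Complex.inv_re, hJ]
  have hwim : w.im = -u.im / J := by
    simp [hwdef, Complex.add_im, Complex.inv_im, hJ]
  have hwimneg : w.im < 0 := by
    rw [hwim, huim]
    have : 0 < 2 * a * ξ := by positivity
    exact div_neg_of_neg_of_pos (by linarith) hJpos
  have hz0 : z ≠ 0 := fun h => by simp [h] at hzimpos
  have hw0 : w ≠ 0 := fun h => by simp [h] at hwimneg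
  have hμz : μ = z ^ ((1:ℂ)/2) := rfl
  have hσw : σ = w ^ ((1:ℂ)/2) := rfl
  obtain ⟨hp, hq⟩ := sqrt_of_im_pos z hzimpos
  obtain ⟨hr, hs⟩ := sqrt_of_im_neg w hwimneg
  rw [← hμz] at hp hq
  rw [← hσw] at hr hs
  set p := μ.re with hpdef
  set q := μ.im with hqdef
  set r := σ.re with hrdef
  set s := σ.im with hsdef
  have hμsq : μ ^ 2 = z := half_pow_sq z hz0
  have hσsq : σ ^ 2 = w := half_pow_sq w hw0
  -- real/imaginary parts of the squares
  have h1 : p^2 - q^2 = z.re := by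
    rw [← hμsq]; simp [pow_two, Complex.mul_re]; try ring
  have h2 : 2 * (p * q) = z.im := by
    rw [← hμsq]; simp [pow_two, Complex.mul_im]; try ring
  have h3 : r^2 - s^2 = w.re := by
    rw [← hσsq]; simp [pow_two, Complex.mul_re]; try ring
  have h4 : 2 * (r * s) = w.im := by
    rw [← hσsq]; simp [pow_two, Complex.mul_im]; try ring
  have hpq : p * q = a * ξ := by rw [hzim] at h2; linarith
  have hJw : J * w.im = -(2 * (a * ξ)) := by
    rw [hwim, huim]; field_simp
  have hrs : J * (r * s) = -(a * ξ) := by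
    linear_combination (J/2) * h4 + (1/2) * hJw
  -- normSq relations
  have hA : (p^2 + q^2)^2 = z.re^2 + z.im^2 := by
    have : Complex.normSq (μ^2) = (Complex.normSq μ)^2 := by
      rw [map_pow]
    rw [hμsq] at this
    rw [Complex.normSq_apply, Complex.normSq_apply] at this
    linear_combination (-1 : ℝ) * this
  have hB : (r^2 + s^2)^2 = w.re^2 + w.im^2 := by
    have : Complex.normSq (σ^2) = (Complex.normSq σ)^2 := by
      rw [map_pow]
    rw [hσsq] at this
    rw [Complex.normSq_apply, Complex.normSq_apply] at this
    linear_combination (-1 : ℝ) * this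
  clear_value c z u J w p q r s μ σ
  -- key inequality : p^2 ≤ J * r^2
  have hkey : p^2 ≤ J * r^2 := by
    set A := p^2 + q^2 with hAdef
    set B := r^2 + s^2 with hBdef
    have hA0 : 0 ≤ A := by positivity
    have hB0 : 0 ≤ B := by positivity
    clear_value A B
    have hJwre : J * w.re = J * h₁ + u.re := by
      rw [hwre]; field_simp
    have hJB2 : (J * B)^2 = (J * h₁ + u.re)^2 + (2*a*ξ)^2 := by
      have h5 : (J*B)^2 = J^2 * B^2 := by ring
      rw [h5, hB]
      have h6 : J^2 * (w.re^2 + w.im^2) = (J*w.re)^2 + (J*w.im)^2 := by ring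
      rw [h6, hJwre]
      have h7 : J * w.im = -(2*a*ξ) := by
        rw [hwim, huim]; field_simp
      rw [h7]; ring
    have hA2 : A^2 = z.re^2 + (2*a*ξ)^2 := by rw [hA, hzim]
    -- z.re² ≤ (J h₁ + u.re)²
    have hzre2 : z.re^2 ≤ (J * h₁ + u.re)^2 := by
      have hure' : u.re = 1 + z.re := by rw [hure, hzre]; ring
      have hzrelb : -(1/2 : ℝ) < z.re := by
        rw [hzre]; linarith [ha2, sq_nonneg ξ, sq_nonneg c]
      have hJh : 0 < J * h₁ := mul_pos hJpos hh
      have hub : z.re ≤ J * h₁ + u.re := by rw [hure']; linarith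
      have hlb : -(J * h₁ + u.re) ≤ z.re := by rw [hure']; linarith
      exact sq_le_sq' hlb hub
    have hAB : A ≤ J * B := by
      have h8 : A^2 ≤ (J*B)^2 := by rw [hA2, hJB2]; linarith [hzre2]
      exact (pow_le_pow_iff_left₀ hA0 (mul_nonneg hJpos.le hB0) two_ne_zero).1 h8
    have h2p : 2 * p^2 = z.re + A := by rw [hAdef]; linarith
    have h2r : 2 * (J * r^2) = J * w.re + J * B := by
      have : 2 * r^2 = w.re + B := by rw [hBdef]; linarith
      linear_combination J * this
    have hzreu : z.re < J * h₁ + u.re := by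
      have hure' : u.re = 1 + z.re := by rw [hure, hzre]; ring
      have hJh : 0 < J * h₁ := mul_pos hJpos hh
      linarith
    rw [hJwre] at h2r
    linarith
  refine ⟨hq, hs, ?_⟩
  rw [Complex.mul_im, abs_of_pos hq, ← hpdef, ← hqdef, ← hrdef, ← hsdef]
  -- goal: |p * s + q * r| ≤ q * r
  rw [abs_le]
  constructor
  · -- -(q*r) ≤ p*s + q*r, we prove 0 ≤ p*s + q*r
    have h9 : 0 ≤ p * s + q * r := by
      -- p * (-s) ≤ q * r : multiply by p*r*J > 0
      have hprJ : 0 < p * r * J := mul_pos (mul_pos hp hr) hJpos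
      have e1 : (p * (-s)) * (p * r * J) = p^2 * (a*ξ) := by
        have : p * (-s) * (p * r * J) = p^2 * (J * (r * s)) * (-1) := by ring
        rw [this, hrs]; ring
      have e2 : (q * r) * (p * r * J) = (J * r^2) * (a*ξ) := by
        have : q * r * (p * r * J) = (J * r^2) * (p * q) := by ring
        rw [this, hpq]
      have hmm : (p * (-s)) * (p * r * J) ≤ (q * r) * (p * r * J) := by
        rw [e1, e2]
        exact mul_le_mul_of_nonneg_right hkey haξ.le
      have h10 : p * (-s) ≤ q * r := le_of_mul_le_mul_right hmm hprJ
      linarith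
    have : 0 < q * r := mul_pos hq hr
    linarith
  · have hps : p * s < 0 := mul_neg_of_pos_of_neg hp hs
    linarith
end

section
/- Let A, B, W : ℝ³ → ℂ be bounded measurable functions of (ξ,ζ) ∈ ℝ×ℝ², let f ∈ C^∞(ℝ) with Fourier transform f̂ satisfying C_{f,s} := ∫_ℝ |ξ|^s |f̂(ξ)| dξ < ∞ for some s ≥ 0, and suppose C_s := sup_{ξ,ξ'∈ℝ, ζ∈ℝ²} |A(ξ,ζ)(B(ξ,ζ) − B(ξ',ζ))W(ξ',ζ)| / |ξ−ξ'|^s < ∞. Then the operator 𝒜[ℬ, f]𝒲 (where 𝒜, ℬ, 𝒲 are the Fourier multipliers with symbols A, B, W, and f acts by multiplication in the x-variable only) is bounded on L²(ℝ³) with operator norm at most C · C_s · C_{f,s} for an absolute constant C. -/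
open MeasureTheory ENNReal

private lemma lint_sub_left' (k : ℝ → ℝ≥0∞) (hk : Measurable k) (a : ℝ) :
    ∫⁻ x, k (a - x) = ∫⁻ x, k x := by
  have h1 : ∀ x : ℝ, a - x = -(x - a) := fun x => by ring
  simp_rw [h1]
  rw [lintegral_sub_right_eq_self (fun x => k (-x)) a]
  exact (Measure.measurePreserving_neg (volume : Measure ℝ)).lintegral_comp hk

private lemma young' (k w : ℝ → ℝ≥0∞) (hk : Measurable k) (hw : Measurable w) :
    ∫⁻ ξ, (∫⁻ ξ', k (ξ - ξ') * w ξ') ^ (2:ℝ)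
      ≤ (∫⁻ t, k t) ^ (2:ℝ) * ∫⁻ ξ', (w ξ') ^ (2:ℝ) := by
  set I := ∫⁻ t, k t with hI
  have hconj : Real.HolderConjugate 2 2 := Real.HolderConjugate.two_two
  have step1 : ∀ ξ : ℝ, (∫⁻ ξ', k (ξ - ξ') * w ξ') ^ (2:ℝ)
      ≤ I * ∫⁻ ξ', k (ξ - ξ') * (w ξ') ^ (2:ℝ) := by
    intro ξ
    have hmeas1 : Measurable fun ξ' => k (ξ - ξ') :=
      hk.comp (measurable_const.sub measurable_id)
    have holder := ENNReal.lintegral_mul_le_Lp_mul_Lq (volume : Measure ℝ) hconj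
      (f := fun ξ' => (k (ξ - ξ')) ^ (1/2 : ℝ))
      (g := fun ξ' => (k (ξ - ξ')) ^ (1/2 : ℝ) * w ξ')
      ((hmeas1.pow_const _).aemeasurable)
      (((hmeas1.pow_const _).mul hw).aemeasurable)
    have heq : ∀ ξ' : ℝ, ((fun ξ' => (k (ξ - ξ')) ^ (1/2 : ℝ)) *
        (fun ξ' => (k (ξ - ξ')) ^ (1/2 : ℝ) * w ξ')) ξ' = k (ξ - ξ') * w ξ' := by
      intro ξ'
      simp only [Pi.mul_apply, ← mul_assoc,
        ← ENNReal.rpow_add_of_nonneg (x := k (ξ - ξ')) (1/2) (1/2) (by norm_num) (by norm_num)]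
      norm_num
    rw [lintegral_congr heq] at holder
    have h2 : ∀ x : ℝ≥0∞, (x ^ (1/2:ℝ)) ^ (2:ℝ) = x := by
      intro x
      rw [← ENNReal.rpow_mul]
      norm_num
    have h3 : ∀ ξ' : ℝ, ((k (ξ - ξ')) ^ (1/2:ℝ) * w ξ') ^ (2:ℝ)
        = k (ξ - ξ') * (w ξ') ^ (2:ℝ) := by
      intro ξ'
      rw [ENNReal.mul_rpow_of_nonneg _ _ (by norm_num), h2]
    simp_rw [h2, h3] at holder
    rw [lint_sub_left' k hk ξ] at holder
    calc (∫⁻ ξ', k (ξ - ξ') * w ξ') ^ (2:ℝ)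
        ≤ (I ^ (1/2:ℝ) * (∫⁻ ξ', k (ξ - ξ') * (w ξ') ^ (2:ℝ)) ^ (1/2:ℝ)) ^ (2:ℝ) :=
          ENNReal.rpow_le_rpow holder (by norm_num)
      _ = I * ∫⁻ ξ', k (ξ - ξ') * (w ξ') ^ (2:ℝ) := by
          rw [ENNReal.mul_rpow_of_nonneg _ _ (by norm_num), h2, h2]
  have hmeas2 : Measurable fun p : ℝ × ℝ => k (p.1 - p.2) * (w p.2) ^ (2:ℝ) :=
    (hk.comp (measurable_fst.sub measurable_snd)).mul ((hw.comp measurable_snd).pow_const _)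
  calc ∫⁻ ξ, (∫⁻ ξ', k (ξ - ξ') * w ξ') ^ (2:ℝ)
      ≤ ∫⁻ ξ, I * ∫⁻ ξ', k (ξ - ξ') * (w ξ') ^ (2:ℝ) := lintegral_mono step1
    _ = I * ∫⁻ ξ, ∫⁻ ξ', k (ξ - ξ') * (w ξ') ^ (2:ℝ) :=
        lintegral_const_mul'' I hmeas2.lintegral_prod_right'.aemeasurable
    _ = I * ∫⁻ ξ', ∫⁻ ξ, k (ξ - ξ') * (w ξ') ^ (2:ℝ) := by
        rw [lintegral_lintegral_swap hmeas2.aemeasurable]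
    _ = I * ∫⁻ ξ', (w ξ') ^ (2:ℝ) * I := by
        congr 1
        refine lintegral_congr fun ξ' => ?_
        have hm : Measurable fun ξ : ℝ => k (ξ - ξ') := hk.comp (measurable_id.sub measurable_const)
        rw [lintegral_mul_const'' _ hm.aemeasurable, lintegral_sub_right_eq_self k ξ', mul_comm]
    _ = I ^ (2:ℝ) * ∫⁻ ξ', (w ξ') ^ (2:ℝ) := by
        rw [lintegral_mul_const'' _ ((hw.pow_const _).aemeasurable)]
        rw [ENNReal.rpow_two]
        ring


/-- Commutator estimate for Fourier multipliers: the operator `𝒜[ℬ,f]𝒲`, written on the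
Fourier side as the kernel operator with kernel `A(ξ,ζ)(B(ξ,ζ)-B(ξ',ζ)) f̂(ξ-ξ') W(ξ',ζ)`,
is bounded on `L²(ℝ³)` with norm at most `C · C_s · C_{f,s}`,
`C_{f,s} = ∫ |ξ|^s ‖f̂(ξ)‖ dξ`, for an absolute constant `C`. -/
theorem stmt13 : ∃ C : ℝ, 0 < C ∧
    ∀ (s : ℝ), 0 ≤ s →
    ∀ (A B W : ℝ × ℝ × ℝ → ℂ), Measurable A → Measurable B → Measurable W →
    (∃ MA : ℝ, ∀ q, ‖A q‖ ≤ MA) → (∃ MB : ℝ, ∀ q, ‖B q‖ ≤ MB) →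
    (∃ MW : ℝ, ∀ q, ‖W q‖ ≤ MW) →
    ∀ (f : ℝ → ℂ), ContDiff ℝ (⊤ : ℕ∞) f →
    ∀ Cs : ℝ, 0 ≤ Cs →
    (∀ (ξ ξ' : ℝ) (ζ : ℝ × ℝ),
      ‖A (ξ, ζ) * (B (ξ, ζ) - B (ξ', ζ)) * W (ξ', ζ)‖ ≤ Cs * |ξ - ξ'| ^ s) →
    Integrable (fun ξ : ℝ => |ξ| ^ s * ‖VectorFourier.fourierIntegral Real.fourierChar volume (innerₗ ℝ) f ξ‖) →
    ∀ u : ℝ × ℝ × ℝ → ℂ, MemLp u 2 volume →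
    eLpNorm (fun q : ℝ × ℝ × ℝ =>
        A q * ∫ ξ' : ℝ,
          (B q - B (ξ', q.2)) * VectorFourier.fourierIntegral Real.fourierChar volume (innerₗ ℝ) f (q.1 - ξ') * W (ξ', q.2) * u (ξ', q.2))
      2 volume ≤
      ENNReal.ofReal (C * Cs * ∫ ξ : ℝ, |ξ| ^ s * ‖VectorFourier.fourierIntegral Real.fourierChar volume (innerₗ ℝ) f ξ‖) *
        eLpNorm u 2 volume := by
  refine ⟨1, one_pos, ?_⟩
  intro s hs A B W hA hB hW _ _ _ f hf Cs hCs hker hint u hu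
  set F := VectorFourier.fourierIntegral Real.fourierChar volume (innerₗ ℝ) f with hFdef
  -- measurability of the Fourier transform
  have hF : Measurable F := by
    have hsm : StronglyMeasurable fun p : ℝ × ℝ => (Real.fourierChar (-(p.2 * p.1)) : Circle) • f p.2 := by
      refine Continuous.stronglyMeasurable ?_
      exact (Real.continuous_fourierChar.comp (by continuity)).smul (hf.continuous.comp continuous_snd)
    have h2 : F = fun w => ∫ v : ℝ, (Real.fourierChar (-(v * w)) : Circle) • f v :=
      funext fun w => Real.fourier_real_eq f w
    rw [h2]
    exact hsm.integral_prod_right'.measurable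
  -- the convolution kernel
  set k : ℝ → ℝ≥0∞ := fun t => ENNReal.ofReal (|t| ^ s) * (‖F t‖₊ : ℝ≥0∞) with hkdef
  have hk : Measurable k :=
    (ENNReal.measurable_ofReal.comp (measurable_abs.pow_const s)).mul hF.enorm
  set Ik := ∫⁻ t, k t with hIkdef
  set Cfs := ∫ ξ : ℝ, |ξ| ^ s * ‖F ξ‖ with hCfsdef
  have hCfs0 : 0 ≤ Cfs :=
    integral_nonneg fun ξ => mul_nonneg (Real.rpow_nonneg (abs_nonneg _) _) (norm_nonneg _)
  have hIk : Ik = ENNReal.ofReal Cfs := by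
    rw [hCfsdef, ofReal_integral_eq_lintegral_ofReal hint
      (Filter.Eventually.of_forall fun ξ =>
        mul_nonneg (Real.rpow_nonneg (abs_nonneg _) _) (norm_nonneg _))]
    refine lintegral_congr fun t => ?_
    rw [ENNReal.ofReal_mul (Real.rpow_nonneg (abs_nonneg _) _), ofReal_norm, enorm_eq_nnnorm]
  have hIk_ne_top : Ik ≠ ⊤ := by rw [hIk]; exact ENNReal.ofReal_ne_top
  -- measurable representative of u
  set u' := hu.1.mk u with hu'def
  have hu'm : StronglyMeasurable u' := hu.1.stronglyMeasurable_mk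
  have huu' : u =ᵐ[volume] u' := hu.1.ae_eq_mk
  set v : ℝ × ℝ × ℝ → ℝ≥0∞ := fun p => (‖u p‖₊ : ℝ≥0∞) with hvdef
  set v' : ℝ × ℝ × ℝ → ℝ≥0∞ := fun p => (‖u' p‖₊ : ℝ≥0∞) with hv'def
  have hv' : Measurable v' := hu'm.measurable.enorm
  set c := ENNReal.ofReal Cs with hcdef
  have hc_ne_top : c ≠ ⊤ := ENNReal.ofReal_ne_top
  set G : ℝ × ℝ × ℝ → ℝ≥0∞ := fun q => ∫⁻ ξ', k (q.1 - ξ') * v (ξ', q.2) with hGdef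
  set G' : ℝ × ℝ × ℝ → ℝ≥0∞ := fun q => ∫⁻ ξ', k (q.1 - ξ') * v' (ξ', q.2) with hG'def
  have hG' : Measurable G' := by
    have : Measurable fun p : (ℝ × ℝ × ℝ) × ℝ => k (p.1.1 - p.2) * v' (p.2, p.1.2) :=
      (hk.comp ((measurable_fst.comp measurable_fst).sub measurable_snd)).mul
        (hv'.comp (measurable_snd.prodMk (measurable_snd.comp measurable_fst)))
    exact this.lintegral_prod_right'
  -- pointwise bound
  have hpt : ∀ q : ℝ × ℝ × ℝ,
      (‖A q * ∫ ξ' : ℝ, (B q - B (ξ', q.2)) * F (q.1 - ξ') * W (ξ', q.2) * u (ξ', q.2)‖₊ : ℝ≥0∞)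
        ≤ c * G q := by
    intro q
    rw [← integral_const_mul]
    refine le_trans (enorm_integral_le_lintegral_enorm _) ?_
    rw [hGdef, ← lintegral_const_mul' c _ hc_ne_top]
    refine lintegral_mono fun ξ' => ?_
    have heqn : ‖A q * ((B q - B (ξ', q.2)) * F (q.1 - ξ') * W (ξ', q.2) * u (ξ', q.2))‖
        = ‖A q * (B q - B (ξ', q.2)) * W (ξ', q.2)‖ * (‖F (q.1 - ξ')‖ * ‖u (ξ', q.2)‖) := by
      simp only [norm_mul]; ring
    have hle : ‖A q * ((B q - B (ξ', q.2)) * F (q.1 - ξ') * W (ξ', q.2) * u (ξ', q.2))‖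
        ≤ (Cs * |q.1 - ξ'| ^ s) * (‖F (q.1 - ξ')‖ * ‖u (ξ', q.2)‖) := by
      rw [heqn]
      exact mul_le_mul_of_nonneg_right (hker q.1 ξ' q.2)
        (mul_nonneg (norm_nonneg _) (norm_nonneg _))
    calc (‖A q * ((B q - B (ξ', q.2)) * F (q.1 - ξ') * W (ξ', q.2) * u (ξ', q.2))‖₊ : ℝ≥0∞)
        = ENNReal.ofReal ‖A q * ((B q - B (ξ', q.2)) * F (q.1 - ξ') * W (ξ', q.2) * u (ξ', q.2))‖ :=
          (ofReal_norm _).symm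
      _ ≤ ENNReal.ofReal ((Cs * |q.1 - ξ'| ^ s) * (‖F (q.1 - ξ')‖ * ‖u (ξ', q.2)‖)) :=
          ENNReal.ofReal_le_ofReal hle
      _ = c * (k (q.1 - ξ') * v (ξ', q.2)) := by
          rw [ENNReal.ofReal_mul (mul_nonneg hCs (Real.rpow_nonneg (abs_nonneg _) _)),
            ENNReal.ofReal_mul hCs, ENNReal.ofReal_mul (norm_nonneg _),
            ofReal_norm, ofReal_norm, enorm_eq_nnnorm, enorm_eq_nnnorm]
          ring
  -- a.e. replacement of G by G'
  have hGG' : ∀ᵐ q ∂(volume : Measure (ℝ × ℝ × ℝ)), G q = G' q := by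
    have h1 : ∀ᵐ z ∂((volume : Measure ℝ).prod (volume : Measure (ℝ × ℝ))), u z = u' z := by
      rw [← Measure.volume_eq_prod]; exact huu'
    have h2 : ∀ᵐ z ∂((volume : Measure (ℝ × ℝ)).prod (volume : Measure ℝ)),
        u z.swap = u' z.swap :=
      (Measure.measurePreserving_swap).quasiMeasurePreserving.ae h1
    have h3 : ∀ᵐ ζ ∂(volume : Measure (ℝ × ℝ)), ∀ᵐ ξ' ∂(volume : Measure ℝ),
        u (ξ', ζ) = u' (ξ', ζ) := Measure.ae_ae_of_ae_prod h2
    have h4 : ∀ᵐ ζ ∂(volume : Measure (ℝ × ℝ)), ∀ ξ : ℝ,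
        (∫⁻ ξ', k (ξ - ξ') * v (ξ', ζ)) = ∫⁻ ξ', k (ξ - ξ') * v' (ξ', ζ) := by
      refine h3.mono fun ζ hζ ξ => lintegral_congr_ae (hζ.mono fun ξ' h => ?_)
      rw [hvdef, hv'def]; simp only [h]
    have h5 : ∀ᵐ q ∂((volume : Measure ℝ).prod (volume : Measure (ℝ × ℝ))), ∀ ξ : ℝ,
        (∫⁻ ξ', k (ξ - ξ') * v (ξ', q.2)) = ∫⁻ ξ', k (ξ - ξ') * v' (ξ', q.2) :=
      Measure.quasiMeasurePreserving_snd.ae h4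
    rw [Measure.volume_eq_prod]
    exact h5.mono fun q hq => hq q.1
  -- main estimate on the lintegral
  have hvv' : ∫⁻ p, v p ^ (2:ℝ) = ∫⁻ p, v' p ^ (2:ℝ) := by
    refine lintegral_congr_ae (huu'.mono fun p h => ?_)
    rw [hvdef, hv'def]; simp only [h]
  have hG'2meas : Measurable fun q : ℝ × ℝ × ℝ => (c * G' q) ^ (2:ℝ) :=
    (measurable_const.mul hG').pow_const _
  have hps : ∀ (φ : ℝ × ℝ × ℝ → ℝ≥0∞),
      AEMeasurable φ ((volume : Measure ℝ).prod (volume : Measure (ℝ × ℝ))) →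
      ∫⁻ p, φ p ∂(volume : Measure (ℝ × ℝ × ℝ)) = ∫⁻ ζ, ∫⁻ ξ, φ (ξ, ζ) := by
    intro φ h
    rw [Measure.volume_eq_prod]
    exact lintegral_prod_symm φ h
  have key : ∫⁻ q, (‖(fun q : ℝ × ℝ × ℝ =>
        A q * ∫ ξ' : ℝ, (B q - B (ξ', q.2)) * F (q.1 - ξ') * W (ξ', q.2) * u (ξ', q.2)) q‖₊ : ℝ≥0∞)
          ^ (2:ℝ) ∂volume
      ≤ (c * Ik) ^ (2:ℝ) * ∫⁻ p, v p ^ (2:ℝ) ∂volume := by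
    calc ∫⁻ q, (‖A q * ∫ ξ' : ℝ, (B q - B (ξ', q.2)) * F (q.1 - ξ') * W (ξ', q.2) * u (ξ', q.2)‖₊ : ℝ≥0∞) ^ (2:ℝ) ∂volume
        ≤ ∫⁻ q, (c * G q) ^ (2:ℝ) ∂volume :=
          lintegral_mono fun q => ENNReal.rpow_le_rpow (hpt q) (by norm_num)
      _ = ∫⁻ q, (c * G' q) ^ (2:ℝ) ∂volume :=
          lintegral_congr_ae (hGG'.mono fun q hq => by simp only [hq])
      _ = ∫⁻ ζ, ∫⁻ ξ, (c * G' (ξ, ζ)) ^ (2:ℝ) := hps _ hG'2meas.aemeasurable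
      _ ≤ ∫⁻ ζ, (c ^ (2:ℝ) * Ik ^ (2:ℝ)) * ∫⁻ ξ', v' (ξ', ζ) ^ (2:ℝ) := by
          refine lintegral_mono fun ζ => ?_
          have hsplit : ∀ ξ : ℝ, (c * G' (ξ, ζ)) ^ (2:ℝ) = c ^ (2:ℝ) * G' (ξ, ζ) ^ (2:ℝ) :=
            fun ξ => ENNReal.mul_rpow_of_nonneg _ _ (by norm_num)
          simp_rw [hsplit]
          rw [lintegral_const_mul' _ _ (ENNReal.rpow_ne_top_of_nonneg (by norm_num) hc_ne_top)]
          rw [mul_assoc]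
          refine mul_le_mul_right ?_ _
          have hy := young' k (fun ξ' => v' (ξ', ζ)) hk
            (hv'.comp (measurable_id.prodMk measurable_const))
          exact hy
      _ = ((c * Ik) ^ (2:ℝ)) * ∫⁻ ζ, ∫⁻ ξ', v' (ξ', ζ) ^ (2:ℝ) := by
          rw [lintegral_const_mul' _ _ (ENNReal.mul_ne_top
            (ENNReal.rpow_ne_top_of_nonneg (by norm_num) hc_ne_top)
            (ENNReal.rpow_ne_top_of_nonneg (by norm_num) hIk_ne_top)),
            ENNReal.mul_rpow_of_nonneg _ _ (by norm_num : (0:ℝ) ≤ 2)]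
      _ = ((c * Ik) ^ (2:ℝ)) * ∫⁻ p, v' p ^ (2:ℝ) ∂volume := by
          rw [hps (fun p => v' p ^ (2:ℝ)) ((hv'.pow_const _).aemeasurable)]
      _ = ((c * Ik) ^ (2:ℝ)) * ∫⁻ p, v p ^ (2:ℝ) ∂volume := by rw [hvv']
  -- conclude
  have hu0 : eLpNorm u 2 volume = (∫⁻ p, v p ^ (2:ℝ) ∂volume) ^ (1/2:ℝ) := by
    rw [eLpNorm_eq_lintegral_rpow_enorm_toReal (by norm_num) (by norm_num)]
    norm_num
    rfl
  rw [eLpNorm_eq_lintegral_rpow_enorm_toReal (by norm_num) (by norm_num)]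
  have h12 : ∀ x : ℝ≥0∞, (x ^ (2:ℝ)) ^ (1/2:ℝ) = x := by
    intro x; rw [← ENNReal.rpow_mul]; norm_num
  simp only [ENNReal.toReal_ofNat]
  calc (∫⁻ q, (‖A q * ∫ ξ' : ℝ, (B q - B (ξ', q.2)) * F (q.1 - ξ') * W (ξ', q.2) * u (ξ', q.2)‖₊ : ℝ≥0∞) ^ (2:ℝ) ∂volume) ^ (1/(2:ℝ))
      ≤ ((c * Ik) ^ (2:ℝ) * ∫⁻ p, v p ^ (2:ℝ) ∂volume) ^ (1/2:ℝ) :=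
        ENNReal.rpow_le_rpow key (by norm_num)
    _ = (c * Ik) * (∫⁻ p, v p ^ (2:ℝ) ∂volume) ^ (1/2:ℝ) := by
        rw [ENNReal.mul_rpow_of_nonneg _ _ (by norm_num : (0:ℝ) ≤ 1/2), h12]
    _ = ENNReal.ofReal (1 * Cs * Cfs) * eLpNorm u 2 volume := by
        rw [hu0, one_mul, ENNReal.ofReal_mul hCs, ← hIk, hcdef]
end

section
/- Let h₁ > 0 and P(r) = r √(h₁ + (1+r²)^{-1}) for r > 0. Then P''(r) has exactly one positive root, namely r₀ = √(1 + √(4 + 3/h₁)), and moreover P'''(r₀) ≠ 0. -/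
/-!
With `w = √(h₁ + (1 + r²)⁻¹)`, two differentiations give `P'' = r Q(r) / ((1 + r²)⁴ w³)` where
`Q(r) = h₁((r² - 1)² - 4) - 3`, the identity `w²(1 + r²) = h₁(1 + r²) + 1` absorbing the square
roots. For `r > 0` the zeros of `P''` are those of `Q`, a quadratic in `r² - 1` whose only root
above `-1` is `√(4 + 3/h₁)`. Since the factor `r Q` vanishes at `r₀`, only it is differentiated in
`P'''(r₀) = r₀ Q'(r₀) / ((1 + r₀²)⁴ w³)`, and `Q'(r₀) = 4h₁r₀(r₀² - 1) > 0`.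
-/

open Real

noncomputable section

theorem HasDerivAt.mul_of_apply_eq_zero {𝕜 : Type*} [NontriviallyNormedField 𝕜] {u g : 𝕜 → 𝕜}
    {u' x : 𝕜} (hu : HasDerivAt u u' x) (hux : u x = 0) (hg : DifferentiableAt 𝕜 g x) :
    HasDerivAt (fun y => u y * g y) (u' * g x) x := by
  simpa [hux] using hu.fun_mul hg.hasDerivAt

namespace IonEulerPoisson

variable {h : ℝ}

def phaseVelocity (h r : ℝ) : ℝ := √(h + (1 + r ^ 2)⁻¹)

def dispersion (h r : ℝ) : ℝ := r * phaseVelocity h r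

def inflectionPoly (h r : ℝ) : ℝ := h * ((r ^ 2 - 1) ^ 2 - 4) - 3

lemma phaseVelocity_pos (hh : 0 < h) (r : ℝ) : 0 < phaseVelocity h r :=
  sqrt_pos.2 (by positivity)

lemma phaseVelocity_sq_mul (hh : 0 < h) (r : ℝ) :
    phaseVelocity h r ^ 2 * (1 + r ^ 2) = h * (1 + r ^ 2) + 1 := by
  rw [phaseVelocity, sq_sqrt (by positivity)]
  field_simp

lemma hasDerivAt_one_add_sq (r : ℝ) : HasDerivAt (fun r : ℝ => 1 + r ^ 2) (2 * r) r := by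
  simpa using (hasDerivAt_pow 2 r).const_add 1

lemma hasDerivAt_phaseVelocity (hh : 0 < h) (r : ℝ) :
    HasDerivAt (phaseVelocity h) (-r / ((1 + r ^ 2) ^ 2 * phaseVelocity h r)) r := by
  unfold phaseVelocity
  convert (((hasDerivAt_one_add_sq r).fun_inv (by positivity)).const_add h).sqrt
    (by positivity) using 1
  have := (phaseVelocity_pos hh r).ne'
  field_simp

lemma hasDerivAt_dispersion (hh : 0 < h) (r : ℝ) :
    HasDerivAt (dispersion h)
      (phaseVelocity h r - r ^ 2 / ((1 + r ^ 2) ^ 2 * phaseVelocity h r)) r := by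
  refine ((hasDerivAt_id' r).fun_mul (hasDerivAt_phaseVelocity hh r)).congr_deriv ?_
  have := (phaseVelocity_pos hh r).ne'
  field_simp
  ring

lemma hasDerivAt_deriv_dispersion (hh : 0 < h) (r : ℝ) :
    HasDerivAt (deriv (dispersion h))
      (r * inflectionPoly h r * ((1 + r ^ 2) ^ 4 * phaseVelocity h r ^ 3)⁻¹) r := by
  rw [funext fun r => (hasDerivAt_dispersion hh r).deriv]
  have hw := (phaseVelocity_pos hh r).ne'
  have hden : (1 + r ^ 2) ^ 2 * phaseVelocity h r ≠ 0 := by positivity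
  have hquot := (hasDerivAt_pow 2 r).fun_div
    (((hasDerivAt_one_add_sq r).fun_pow 2).fun_mul (hasDerivAt_phaseVelocity hh r)) hden
  refine ((hasDerivAt_phaseVelocity hh r).fun_sub hquot).congr_deriv ?_
  have hrel := phaseVelocity_sq_mul hh r
  simp only [inflectionPoly]
  generalize phaseVelocity h r = w at hrel hw ⊢
  field_simp
  linear_combination (r ^ 3 - 3 * r) * hrel

lemma iteratedDeriv_two_dispersion (hh : 0 < h) :
    iteratedDeriv 2 (dispersion h) =
      fun r => r * inflectionPoly h r * ((1 + r ^ 2) ^ 4 * phaseVelocity h r ^ 3)⁻¹ := by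
  rw [iteratedDeriv_succ, iteratedDeriv_one]
  exact funext fun r => (hasDerivAt_deriv_dispersion hh r).deriv

lemma iteratedDeriv_two_dispersion_eq_zero_iff (hh : 0 < h) {r : ℝ} (hr : 0 < r) :
    iteratedDeriv 2 (dispersion h) r = 0 ↔ inflectionPoly h r = 0 := by
  have hw := (phaseVelocity_pos hh r).ne'
  have hs : 1 + r ^ 2 ≠ 0 := by positivity
  simp [iteratedDeriv_two_dispersion hh, hr.ne', hw, hs]

lemma inflectionPoly_eq_zero_iff (hh : 0 < h) {r : ℝ} (hr : 0 < r) :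
    inflectionPoly h r = 0 ↔ r = √(1 + √(4 + 3 / h)) := by
  set c := √(4 + 3 / h)
  have hc : 2 < c := lt_sqrt_of_sq_lt (by norm_num; positivity)
  have hfactor : inflectionPoly h r = h * ((r ^ 2 - 1 - c) * (r ^ 2 - 1 + c)) := by
    have hc2 : h * c ^ 2 = 4 * h + 3 := by
      rw [sq_sqrt (by positivity)]
      field_simp
    unfold inflectionPoly
    linear_combination hc2
  have hpos : r ^ 2 - 1 + c ≠ 0 := by nlinarith
  rw [hfactor, mul_eq_zero, mul_eq_zero, or_iff_right hh.ne', or_iff_left hpos, eq_comm (a := r),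
    sqrt_eq_iff_eq_sq (by positivity) hr.le]
  constructor <;> intro <;> linarith

lemma one_lt_sq_of_inflectionPoly_eq_zero (hh : 0 < h) {r : ℝ} (hQ : inflectionPoly h r = 0) :
    1 < r ^ 2 := by
  unfold inflectionPoly at hQ
  have : 4 < (r ^ 2 - 1) ^ 2 := by
    by_contra! H
    nlinarith [mul_nonneg hh.le (sub_nonneg.2 H)]
  nlinarith [sq_nonneg r]

lemma hasDerivAt_inflectionPoly (h r : ℝ) :
    HasDerivAt (inflectionPoly h) (4 * h * r * (r ^ 2 - 1)) r := by
  refine ((((((hasDerivAt_pow 2 r).sub_const 1).fun_pow 2).sub_const 4).const_mul h).sub_const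
    3).congr_deriv ?_
  push_cast
  ring

lemma iteratedDeriv_three_dispersion_pos (hh : 0 < h) {r : ℝ} (hr : 0 < r)
    (hQ : inflectionPoly h r = 0) : 0 < iteratedDeriv 3 (dispersion h) r := by
  have hu : HasDerivAt (fun r => r * inflectionPoly h r) (r * (4 * h * r * (r ^ 2 - 1))) r := by
    simpa [hQ] using (hasDerivAt_id' r).fun_mul (hasDerivAt_inflectionPoly h r)
  have hg : DifferentiableAt ℝ (fun r => ((1 + r ^ 2) ^ 4 * phaseVelocity h r ^ 3)⁻¹) r := by
    have := (hasDerivAt_phaseVelocity hh r).differentiableAt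
    have := (phaseVelocity_pos hh r).ne'
    fun_prop (disch := positivity)
  rw [iteratedDeriv_succ, iteratedDeriv_two_dispersion hh,
    (hu.mul_of_apply_eq_zero (by simp [hQ]) hg).deriv]
  have := one_lt_sq_of_inflectionPoly_eq_zero hh hQ
  have := phaseVelocity_pos hh r
  have : 0 < r ^ 2 - 1 := by linarith
  positivity

end IonEulerPoisson

end

/-- The dispersion relation `P(r) = r√(h₁+(1+r²)⁻¹)`: `P''` has exactly one positive root
`r₀ = √(1+√(4+3/h₁))` and `P'''(r₀) ≠ 0`. -/
theorem stmt14 (h₁ : ℝ) (hh : 0 < h₁) :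
    let P : ℝ → ℝ := fun r => r * Real.sqrt (h₁ + (1 + r ^ 2)⁻¹)
    let r₀ : ℝ := Real.sqrt (1 + Real.sqrt (4 + 3 / h₁))
    (∀ r : ℝ, 0 < r → (iteratedDeriv 2 P r = 0 ↔ r = r₀)) ∧
      iteratedDeriv 3 P r₀ ≠ 0 := by
  intro P r₀
  have hP : P = IonEulerPoisson.dispersion h₁ := rfl
  have hr₀ : 0 < r₀ := sqrt_pos.2 (by positivity)
  have hQ₀ : IonEulerPoisson.inflectionPoly h₁ r₀ = 0 :=
    (IonEulerPoisson.inflectionPoly_eq_zero_iff hh hr₀).2 rfl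
  refine ⟨fun r hr => ?_, (IonEulerPoisson.iteratedDeriv_three_dispersion_pos hh hr₀ hQ₀).ne'⟩
  rw [hP, IonEulerPoisson.iteratedDeriv_two_dispersion_eq_zero_iff hh hr,
    IonEulerPoisson.inflectionPoly_eq_zero_iff hh hr]
end
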